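/- (Lemma 1, closed form.) Let P, Q ≥ 1 be integers and N = P·Q. Let α₁, α₂ ≥ 0 with α₁² + α₂² = 1, let ρ > 0, let R > 0 be the target rate, set ε = 2^R − 1 and assume τ := α₁² − α₂²·ε > 0, and set ξ = Q·ε/(ρ·τ). Let Z₁, …, Z_P be independent and identically distributed real random variables, each distributed as the product X·Y of independent X ~ Gamma(Q,1) and Y ~ Exp(1). Then the probability that log₂(1 + α₁²·(Z_p/Q)/(α₂²·(Z_p/Q) + 1/ρ)) < R holds simultaneously for all p = 1, …, P equals (ξ^{N/2}/Γ(Q)^P)·(ξ^{−Q/2}·Γ(Q) − 2·K_Q(2·√ξ))^P. -/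

import Mathlib

/-!
Conditioning on the Gamma factor `X` of `Z = X Y`, `P(Z ≥ ξ) = E[exp(-ξ/X)] =
Γ(Q)⁻¹ ∫₀^∞ x^(Q-1) exp(-x - ξ/x) dx`, and the substitution `x = √ξ eᵗ` turns this integral into
`ξ^(Q/2) ∫_ℝ exp(Qt - 2√ξ cosh t) dt = 2 ξ^(Q/2) K_Q(2√ξ)`. Since `Z ≥ 0`, the rate of a branch
is below `R` exactly when `Z < ξ`, so by independence the outage probability is the `P`-th power
of `1 - 2 ξ^(Q/2) K_Q(2√ξ) / Γ(Q)`.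
-/

open MeasureTheory ProbabilityTheory

/-- The modified Bessel function of the second kind, via its integral representation
`K_ν(x) = ∫₀^∞ exp(−x cosh t) cosh(ν t) dt`. -/
noncomputable def besselK (ν x : ℝ) : ℝ :=
  ∫ t in Set.Ioi (0 : ℝ), Real.exp (-x * Real.cosh t) * Real.cosh (ν * t)

open Real Set

lemma sq_div_four_le_cosh (t : ℝ) : t ^ 2 / 4 ≤ cosh t := by
  rw [← cosh_abs, cosh_eq]
  nlinarith [quadratic_le_exp_of_nonneg (abs_nonneg t), exp_pos (-|t|), sq_abs t, abs_nonneg t]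

lemma integrable_exp_mul_sub_mul_cosh (ν : ℝ) {c : ℝ} (hc : 0 < c) :
    Integrable fun t : ℝ => exp (ν * t - c * cosh t) := by
  have hgauss : Integrable fun t : ℝ => exp (ν ^ 2 / c) * exp (-(c / 4) * (t - 2 * ν / c) ^ 2) :=
    ((integrable_exp_neg_mul_sq (by positivity)).comp_sub_right _).const_mul _
  refine hgauss.mono' (by fun_prop) (ae_of_all _ fun t => ?_)
  have hsq : ν ^ 2 / c + -(c / 4) * (t - 2 * ν / c) ^ 2 = ν * t - c * (t ^ 2 / 4) := by
    field_simp
    ring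
  rw [norm_of_nonneg (exp_pos _).le, ← exp_add, hsq]
  gcongr
  exact sq_div_four_le_cosh t

lemma integral_exp_mul_sub_mul_cosh (ν : ℝ) {c : ℝ} (hc : 0 < c) :
    ∫ t, exp (ν * t - c * cosh t) = 2 * besselK ν c := by
  set g : ℝ → ℝ := fun t => exp (ν * t - c * cosh t)
  have hg : Integrable g := integrable_exp_mul_sub_mul_cosh ν hc
  have hIic : ∫ t in Iic 0, g t = ∫ t in Ioi 0, g (-t) := by
    rw [integral_comp_neg_Ioi, neg_zero]
  rw [← integral_add_compl measurableSet_Ioi hg, compl_Ioi, hIic,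
    ← integral_add hg.integrableOn hg.comp_neg.integrableOn, besselK, ← integral_const_mul]
  refine setIntegral_congr_fun measurableSet_Ioi fun t _ => ?_
  simp only [g, cosh_neg, cosh_eq (ν * t), sub_eq_add_neg, exp_add, neg_mul, mul_neg]
  ring

lemma integral_Ioi_eq_integral_mul_exp {E : Type*} [NormedAddCommGroup E] [NormedSpace ℝ E]
    (f : ℝ → E) {c : ℝ} (hc : 0 < c) :
    ∫ x in Ioi 0, f x = ∫ t, (c * exp t) • f (c * exp t) := by
  have himage : (fun t => c * exp t) '' univ = Ioi 0 := by
    rw [image_univ, show (fun t => c * exp t) = (c * ·) ∘ exp from rfl, range_comp, range_exp,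
      image_mul_left_Ioi hc, mul_zero]
  have := integral_image_eq_integral_abs_deriv_smul MeasurableSet.univ
    (fun t _ => ((hasDerivAt_exp t).const_mul c).hasDerivWithinAt)
    (fun a _ b _ h => exp_injective (mul_left_cancel₀ hc.ne' h)) f
  rw [himage, Measure.restrict_univ] at this
  simpa [abs_of_pos hc] using this

lemma integral_rpow_mul_exp_neg_sub_div (ν : ℝ) {ξ : ℝ} (hξ : 0 < ξ) :
    ∫ x in Ioi 0, x ^ (ν - 1) * exp (-x - ξ / x) = 2 * ξ ^ (ν / 2) * besselK ν (2 * √ξ) := by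
  have hc : 0 < √ξ := sqrt_pos.mpr hξ
  have hsubst : ∀ t : ℝ, (√ξ * exp t) • ((√ξ * exp t) ^ (ν - 1) *
      exp (-(√ξ * exp t) - ξ / (√ξ * exp t))) = ξ ^ (ν / 2) * exp (ν * t - 2 * √ξ * cosh t) := by
    intro t
    have hx : 0 < √ξ * exp t := by positivity
    have hpow : (√ξ * exp t) ^ ν = ξ ^ (ν / 2) * exp (ν * t) := by
      rw [mul_rpow hc.le (exp_pos t).le, sqrt_eq_rpow, ← rpow_mul hξ.le, ← exp_mul]
      ring_nf
    have hdiv : ξ / (√ξ * exp t) = √ξ * exp (-t) := by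
      rw [exp_neg]
      field_simp
      rw [sq_sqrt hξ.le]
    have hexp : ν * t - 2 * √ξ * cosh t = ν * t + (-(√ξ * exp t) - √ξ * exp (-t)) := by
      rw [cosh_eq]
      ring
    rw [smul_eq_mul, rpow_sub_one hx.ne', hpow, hdiv, hexp, exp_add]
    field_simp
  rw [integral_Ioi_eq_integral_mul_exp _ hc]
  simp_rw [hsubst]
  rw [integral_const_mul, integral_exp_mul_sub_mul_cosh ν (by positivity)]
  ring

lemma gammaMeasure_Iic_zero (a r : ℝ) : gammaMeasure a r (Iic 0) = 0 := by
  rw [gammaMeasure, withDensity_apply _ measurableSet_Iic, setLIntegral_congr Iio_ae_eq_Iic.symm]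
  exact lintegral_gammaPDF_of_nonpos le_rfl

lemma ae_pos_gammaMeasure (a r : ℝ) : ∀ᵐ x ∂gammaMeasure a r, 0 < x :=
  ae_iff.mpr (measure_mono_null (fun _ hx => not_lt.mp hx) (gammaMeasure_Iic_zero a r))

lemma expMeasure_Ici {r b : ℝ} (hr : 0 < r) (hb : 0 ≤ b) :
    expMeasure r (Ici b) = ENNReal.ofReal (exp (-(r * b))) := by
  have := isProbabilityMeasure_expMeasure hr
  have : NullSingletonClass (expMeasure r) := by unfold expMeasure gammaMeasure; infer_instance
  have hcdf : 0 ≤ 1 - exp (-(r * b)) := sub_nonneg.mpr (exp_le_one_iff.mpr (by nlinarith))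
  rw [← compl_Iio, prob_compl_eq_one_sub measurableSet_Iio, measure_congr Iio_ae_eq_Iic,
    ← ofReal_cdf, cdf_expMeasure_eq hr, if_pos hb, ← ENNReal.ofReal_one,
    ← ENNReal.ofReal_sub _ hcdf, sub_sub_cancel]

noncomputable def gammaExpMulLaw (a : ℝ) : Measure ℝ :=
  ((gammaMeasure a 1).prod (expMeasure 1)).map fun q => q.1 * q.2

lemma isProbabilityMeasure_gammaExpMulLaw {a : ℝ} (ha : 0 < a) :
    IsProbabilityMeasure (gammaExpMulLaw a) := by
  have := isProbabilityMeasure_gammaMeasure ha one_pos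
  have := isProbabilityMeasure_expMeasure one_pos
  exact Measure.isProbabilityMeasure_map (by fun_prop)

lemma ae_nonneg_gammaExpMulLaw (a : ℝ) : ∀ᵐ z ∂gammaExpMulLaw a, 0 ≤ z := by
  have := isProbabilityMeasure_expMeasure one_pos
  rw [gammaExpMulLaw, ae_map_iff (by fun_prop) measurableSet_Ici]
  filter_upwards [Measure.quasiMeasurePreserving_fst.ae (ae_pos_gammaMeasure a 1),
    Measure.quasiMeasurePreserving_snd.ae (ae_pos_gammaMeasure 1 1)] with q hx hy
  exact (mul_pos hx hy).le

lemma gammaExpMulLaw_real_Ici {a ξ : ℝ} (ha : 0 < a) (hξ : 0 ≤ ξ) :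
    (gammaExpMulLaw a).real (Ici ξ) =
      (Gamma a)⁻¹ * ∫ x in Ioi 0, x ^ (a - 1) * exp (-x - ξ / x) := by
  have := isProbabilityMeasure_expMeasure one_pos
  have hmul : Measurable fun q : ℝ × ℝ => q.1 * q.2 := by fun_prop
  have hpdf : Measurable (gammaPDF a 1) := (measurable_gammaPDFReal a 1).ennreal_ofReal
  have hsection : ∀ x ∈ Ioi (0 : ℝ),
      gammaPDF a 1 x * expMeasure 1 (Prod.mk x ⁻¹' ((fun q => q.1 * q.2) ⁻¹' Ici ξ)) =
        ENNReal.ofReal ((Gamma a)⁻¹ * (x ^ (a - 1) * exp (-x - ξ / x))) := by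
    intro x (hx : 0 < x)
    have hIci : Prod.mk x ⁻¹' ((fun q : ℝ × ℝ => q.1 * q.2) ⁻¹' Ici ξ) = Ici (ξ / x) := by
      ext y
      simp [div_le_iff₀' hx]
    rw [hIci, expMeasure_Ici one_pos (by positivity), gammaPDF_of_nonneg hx.le,
      ← ENNReal.ofReal_mul (by positivity), one_rpow, sub_eq_add_neg (-x), exp_add]
    ring_nf
  rw [measureReal_def, gammaExpMulLaw, Measure.map_apply hmul measurableSet_Ici,
    Measure.prod_apply (hmul measurableSet_Ici),
    ← Measure.restrict_eq_self_of_ae_mem (s := Ioi 0) (ae_pos_gammaMeasure a 1), gammaMeasure,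
    setLIntegral_withDensity_eq_setLIntegral_mul _ hpdf
      (measurable_measure_prodMk_left (hmul measurableSet_Ici)) measurableSet_Ioi]
  simp only [Pi.mul_apply]
  rw [setLIntegral_congr_fun measurableSet_Ioi hsection,
    ← integral_eq_lintegral_of_nonneg_ae, integral_const_mul]
  · filter_upwards [ae_restrict_mem measurableSet_Ioi] with x (hx : 0 < x)
    have := Gamma_pos_of_pos ha
    positivity
  · fun_prop

lemma gammaExpMulLaw_real_Iio {a ξ : ℝ} (ha : 0 < a) (hξ : 0 < ξ) :
    (gammaExpMulLaw a).real (Iio ξ) = 1 - 2 * ξ ^ (a / 2) * besselK a (2 * √ξ) / Gamma a := by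
  have := isProbabilityMeasure_gammaExpMulLaw ha
  rw [← compl_Ici, probReal_compl_eq_one_sub measurableSet_Ici, gammaExpMulLaw_real_Ici ha hξ.le,
    integral_rpow_mul_exp_neg_sub_div a hξ]
  ring

lemma logb_one_add_div_lt_iff {a b ρ R w : ℝ} (ha : 0 ≤ a) (hb : 0 ≤ b) (hρ : 0 < ρ)
    (hw : 0 ≤ w) (hτ : 0 < a - b * (2 ^ R - 1)) :
    logb 2 (1 + a * w / (b * w + 1 / ρ)) < R ↔ w < (2 ^ R - 1) / (ρ * (a - b * (2 ^ R - 1))) := by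
  set ε := (2 : ℝ) ^ R - 1
  have hden : 0 < b * w + 1 / ρ := by positivity
  have hρden : ε * (b * w + 1 / ρ) = (ε * b * w * ρ + ε) / ρ := by field_simp
  rw [logb_lt_iff_lt_rpow one_lt_two (by positivity), ← lt_sub_iff_add_lt', div_lt_iff₀ hden,
    lt_div_iff₀ (by positivity), hρden, lt_div_iff₀ hρ]
  constructor <;> intro h <;> linarith

lemma ProbabilityTheory.iIndepFun.measure_setOf_forall_mem_eq_pow {Ω ι β : Type*}
    [MeasurableSpace Ω] [MeasurableSpace β] [Fintype ι] {μ : Measure Ω} {ν : Measure β} [NeZero ν]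
    {X : ι → Ω → β} (hX : iIndepFun X μ) (hlaw : ∀ i, μ.map (X i) = ν) {S : Set β}
    (hS : MeasurableSet S) :
    μ {ω | ∀ i, X i ω ∈ S} = ν S ^ Fintype.card ι := by
  have hXS : ∀ i, μ (X i ⁻¹' S) = ν S := fun i => by
    have hXi : AEMeasurable (X i) μ := .of_map_ne_zero (by rw [hlaw i]; exact NeZero.ne ν)
    rw [← hlaw i, Measure.map_apply_of_aemeasurable hXi hS]
  rw [show {ω | ∀ i, X i ω ∈ S} = ⋂ i, X i ⁻¹' S by ext; simp]
  simpa [hXS] using hX.measure_inter_preimage_eq_mul Finset.univ (fun _ _ => hS)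

lemma one_sub_div_pow_eq_rpow_mul {x g k q : ℝ} (hx : 0 < x) (hg : g ≠ 0) (P : ℕ) :
    (1 - 2 * x ^ (q / 2) * k / g) ^ P =
      x ^ (P * q / 2) / g ^ P * (x ^ (-q / 2) * g - 2 * k) ^ P := by
  have hsplit : x ^ (P * q / 2) = (x ^ (q / 2)) ^ P := by
    rw [← rpow_mul_natCast hx.le]
    ring_nf
  rw [hsplit, neg_div, rpow_neg hx.le, ← div_pow, ← mul_pow]
  field_simp

theorem stmt_6_general (P Q N : ℕ) (hQ : 1 ≤ Q) (hN : N = P * Q)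
    (α₁ α₂ ρ R ε τ ξ : ℝ)
    (hρ : 0 < ρ) (hR : 0 < R) (hε : ε = 2 ^ R - 1)
    (hτ : τ = α₁ ^ 2 - α₂ ^ 2 * ε) (hτpos : 0 < τ) (hξ : ξ = Q * ε / (ρ * τ))
    {Ω : Type*} [MeasureSpace Ω]
    (Z : Fin P → Ω → ℝ)
    (hiid : iIndepFun Z ℙ)
    (hlaw : ∀ p, Measure.map (Z p) ℙ =
      Measure.map (fun q : ℝ × ℝ => q.1 * q.2) ((gammaMeasure Q 1).prod (expMeasure 1))) :
    (ℙ {ω | ∀ p : Fin P,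
        Real.logb 2 (1 + α₁ ^ 2 * (Z p ω / Q) / (α₂ ^ 2 * (Z p ω / Q) + 1 / ρ)) < R}).toReal =
      (ξ ^ ((N : ℝ) / 2) / Real.Gamma Q ^ P) *
        (ξ ^ (-(Q : ℝ) / 2) * Real.Gamma Q - 2 * besselK Q (2 * Real.sqrt ξ)) ^ P := by
  have hQ0 : (0 : ℝ) < Q := by exact_mod_cast hQ
  have hε0 : 0 < ε := by rw [hε, sub_pos]; exact one_lt_rpow one_lt_two hR
  have hξ0 : 0 < ξ := by rw [hξ]; positivity
  have := isProbabilityMeasure_gammaExpMulLaw hQ0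
  set S : Set ℝ := {z | logb 2 (1 + α₁ ^ 2 * (z / Q) / (α₂ ^ 2 * (z / Q) + 1 / ρ)) < R}
  have hS : MeasurableSet S := measurableSet_lt (by unfold logb; fun_prop) measurable_const
  have hSξ : S =ᵐ[gammaExpMulLaw Q] Iio ξ := by
    filter_upwards [ae_nonneg_gammaExpMulLaw Q] with z hz
    have hrate := logb_one_add_div_lt_iff (R := R) (sq_nonneg α₁) (sq_nonneg α₂) hρ
      (div_nonneg hz hQ0.le) (by rwa [← hε, ← hτ])
    have hξQ : ε / (ρ * τ) = ξ / Q := by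
      rw [hξ]
      field_simp
    rw [← hε, ← hτ, hξQ, div_lt_div_iff_of_pos_right hQ0] at hrate
    exact propext hrate
  change (ℙ {ω | ∀ p, Z p ω ∈ S}).toReal = _
  rw [hiid.measure_setOf_forall_mem_eq_pow (ν := gammaExpMulLaw Q) hlaw hS, measure_congr hSξ,
    ENNReal.toReal_pow, ← measureReal_def, gammaExpMulLaw_real_Iio hQ0 hξ0, Fintype.card_fin,
    hN, Nat.cast_mul]
  exact one_sub_div_pow_eq_rpow_mul hξ0 (Gamma_pos_of_pos hQ0).ne' P

theorem stmt_6 (P Q N : ℕ) (hP : 1 ≤ P) (hQ : 1 ≤ Q) (hN : N = P * Q)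
    (α₁ α₂ ρ R ε τ ξ : ℝ) (hα₁ : 0 ≤ α₁) (hα₂ : 0 ≤ α₂) (hα : α₁ ^ 2 + α₂ ^ 2 = 1)
    (hρ : 0 < ρ) (hR : 0 < R) (hε : ε = 2 ^ R - 1)
    (hτ : τ = α₁ ^ 2 - α₂ ^ 2 * ε) (hτpos : 0 < τ) (hξ : ξ = Q * ε / (ρ * τ))
    {Ω : Type*} [MeasureSpace Ω] [IsProbabilityMeasure (ℙ : Measure Ω)]
    (Z : Fin P → Ω → ℝ)
    (hiid : iIndepFun Z ℙ)
    (hlaw : ∀ p, Measure.map (Z p) ℙ =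
      Measure.map (fun q : ℝ × ℝ => q.1 * q.2) ((gammaMeasure Q 1).prod (expMeasure 1))) :
    (ℙ {ω | ∀ p : Fin P,
        Real.logb 2 (1 + α₁ ^ 2 * (Z p ω / Q) / (α₂ ^ 2 * (Z p ω / Q) + 1 / ρ)) < R}).toReal =
      (ξ ^ ((N : ℝ) / 2) / Real.Gamma Q ^ P) *
        (ξ ^ (-(Q : ℝ) / 2) * Real.Gamma Q - 2 * besselK Q (2 * Real.sqrt ξ)) ^ P :=
  stmt_6_general P Q N hQ hN α₁ α₂ ρ R ε τ ξ hρ hR hε hτ hτpos hξ Z hiid hlaw
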